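/- For the encoding f of ω-branching trees into binary trees (node (n₁,...,n_k) ↦ binary node r^{n₁} l r^{n₂} l ... r^{n_k} l, with all such encoded nodes and their right-ancestors labelled a and everything else b), the binary tree f(T) has an a-labelled branch turning left infinitely often if and only if T has an infinite branch. -/

import Mathlib

open Classical

/-- Infinite binary trees over {a,b}; `true` = a, `false` = b. -/
abbrev Tree2 := List (Fin 2) → Bool

/-- The length-`n` prefix of a branch. -/
def pre (β : ℕ → Fin 2) (n : ℕ) : List (Fin 2) := List.ofFn (fun i : Fin n => β i)

/-- A branch is good: all its finite prefixes are labelled `a` and it turns left (0)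
infinitely often. -/
def Good (t : Tree2) (β : ℕ → Fin 2) : Prop :=
  (∀ n, t (pre β n) = true) ∧ (∀ m, ∃ n ≥ m, β n = 0)

/-- `β` is strictly to the left of `γ`. -/
def LeftOf (β γ : ℕ → Fin 2) : Prop :=
  ∃ n, (∀ i < n, β i = γ i) ∧ β n = 0 ∧ γ n = 1

/-- A branch passes through a node. -/
def Through (γ : ℕ → Fin 2) (v : List (Fin 2)) : Prop := pre γ v.length = v

/-- The encoding (n₁,…,n_k) ↦ r^{n₁} l r^{n₂} l ⋯ r^{n_k} l, with r = 1 and l = 0. -/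
def enc : List ℕ → List (Fin 2)
  | [] => []
  | n :: u => List.replicate n (1 : Fin 2) ++ (0 : Fin 2) :: enc u

/-- The reduction: a node of `fT T` is labelled `a` iff it is a prefix of some word
`enc u ++ r^m` with `u ∈ T`. -/
noncomputable def fT (T : List ℕ → Bool) : Tree2 := fun v =>
  if ∃ u m, T u = true ∧ v <+: (enc u ++ List.replicate m (1 : Fin 2)) then true else false

/-!
Read the left turns `0` of a binary branch as separators. A branch turning left infinitely often
is then the limit of the codes `enc [x 0, …, x (k-1)]`, where `x k` is the length of the run of
right turns before its `k`-th left turn; conversely every `x : ℕ → ℕ` yields such a branch. The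
branch is labelled `a` throughout iff every such code is a prefix of some `enc u ++ r^m` with
`u ∈ T`; as `enc w <+: enc u ++ r^m` forces `w <+: u`, prefix-closedness of `T` turns this into
`[x 0, …, x (k-1)] ∈ T` for all `k`.
-/

open List

section Encoding

theorem enc_append (u v : List ℕ) : enc (u ++ v) = enc u ++ enc v := by
  induction u with
  | nil => rfl
  | cons n u ih => simp [enc, ih]

theorem enc_ofFn_succ (x : ℕ → ℕ) (k : ℕ) :
    enc (ofFn fun i : Fin (k + 1) => x i) =
      enc (ofFn fun i : Fin k => x i) ++ (replicate (x k) 1 ++ [0]) := by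
  rw [ofFn_succ', concat_eq_append, enc_append]
  simp [enc]

theorem length_le_length_enc (u : List ℕ) : u.length ≤ (enc u).length := by
  induction u with
  | nil => simp
  | cons n u ih => simp only [enc, length_cons, length_append, length_replicate]; omega

theorem eq_and_prefix_of_replicate_one_append_zero_prefix : ∀ {n n' : ℕ} {s s' : List (Fin 2)},
    replicate n 1 ++ 0 :: s <+: replicate n' 1 ++ 0 :: s' → n = n' ∧ s <+: s'
  | 0, 0, _, _, h => by simpa using h
  | 0, _ + 1, _, _, h => by simp [replicate_succ] at h
  | _ + 1, 0, _, _, h => by simp [replicate_succ] at h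
  | _ + 1, _ + 1, _, _, h => by
    simp only [replicate_succ, cons_append, cons_prefix_cons, true_and] at h
    exact (eq_and_prefix_of_replicate_one_append_zero_prefix h).imp_left (congrArg (· + 1))

theorem prefix_of_enc_prefix_enc_append_replicate :
    ∀ {w u : List ℕ} {m : ℕ}, enc w <+: enc u ++ replicate m 1 → w <+: u
  | [], _, _, _ => nil_prefix
  | n :: w, [], m, h => by
    have h0 : (0 : Fin 2) ∈ replicate m 1 := h.subset (by simp [enc])
    simp [mem_replicate] at h0
  | n :: w, n' :: u, m, h => by
    simp only [enc, append_assoc, cons_append] at h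
    obtain ⟨rfl, hs⟩ := eq_and_prefix_of_replicate_one_append_zero_prefix h
    exact cons_prefix_cons.mpr ⟨rfl, prefix_of_enc_prefix_enc_append_replicate hs⟩

end Encoding

section Branches

variable {β : ℕ → Fin 2}

theorem pre_succ (β : ℕ → Fin 2) (n : ℕ) : pre β (n + 1) = pre β n ++ [β n] := by
  rw [pre, ofFn_succ', concat_eq_append]
  rfl

theorem pre_prefix_pre {m n : ℕ} (h : m ≤ n) : pre β m <+: pre β n := by
  induction n, h using Nat.le_induction with
  | base => exact prefix_refl _
  | succ n _ ih => exact ih.trans (pre_succ β n ▸ prefix_append _ _)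

theorem Through.pre_prefix {v : List (Fin 2)} (h : Through β v) {n : ℕ} (hn : n ≤ v.length) :
    pre β n <+: v :=
  h ▸ pre_prefix_pre hn

theorem through_append_singleton_iff {v : List (Fin 2)} {a : Fin 2} :
    Through β (v ++ [a]) ↔ Through β v ∧ β v.length = a := by
  simp [Through, pre_succ]

theorem Through.append_replicate {v : List (Fin 2)} (h : Through β v) {a : Fin 2} :
    ∀ {c : ℕ}, (∀ i < c, β (v.length + i) = a) → Through β (v ++ replicate c a)
  | 0, _ => by simpa using h
  | c + 1, hc => by
    rw [replicate_succ', ← append_assoc, through_append_singleton_iff]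
    exact ⟨h.append_replicate fun i hi => hc i (by omega), by simpa using hc c (by omega)⟩

theorem exists_through_of_prefix_chain {L : ℕ → List (Fin 2)} (hchain : ∀ k, L k <+: L (k + 1))
    (hlen : ∀ k, k ≤ (L k).length) : ∃ β, ∀ k, Through β (L k) := by
  have hmono {j k : ℕ} (h : j ≤ k) : L j <+: L k := by
    induction k, h using Nat.le_induction with
    | base => exact prefix_refl _
    | succ k _ ih => exact ih.trans (hchain k)
  refine ⟨fun n => (L (n + 1)).getD n 0, fun k => ext_getElem (by simp [pre]) fun i hi hik => ?_⟩
  have hi' : i < (L (i + 1)).length := hlen (i + 1)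
  simp only [pre, List.getElem_ofFn, getD_eq_getElem _ _ hi']
  rw [(hmono (Nat.le_add_right (i + 1) k)).getElem hi',
    (hmono (Nat.le_add_left k (i + 1))).getElem hik]

end Branches

theorem exists_through_enc_of_frequently_zero {β : ℕ → Fin 2} (hβ : ∀ m, ∃ n ≥ m, β n = 0) :
    ∃ x : ℕ → ℕ, ∀ k, Through β (enc (ofFn fun i : Fin k => x i)) := by
  obtain ⟨z, hz_ge, hz_zero, hz_min⟩ : ∃ z : ℕ → ℕ, (∀ a, a ≤ z a) ∧ (∀ a, β (z a) = 0) ∧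
      ∀ a i, a ≤ i → i < z a → β i = 1 :=
    ⟨fun a => Nat.find (hβ a), fun a => (Nat.find_spec (hβ a)).1,
      fun a => (Nat.find_spec (hβ a)).2,
      fun a i hai hi => Fin.eq_one_of_ne_zero _ fun h0 => Nat.find_min (hβ a) hi ⟨hai, h0⟩⟩
  set start : ℕ → ℕ := fun k => (fun a => z a + 1)^[k] 0
  refine ⟨fun k => z (start k) - start k, fun k => ?_⟩
  suffices h : Through β (enc (ofFn fun i : Fin k => z (start i) - start i)) ∧
      (enc (ofFn fun i : Fin k => z (start i) - start i)).length = start k from h.1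
  induction k with
  | zero => simp [Through, pre, enc, start]
  | succ k ih =>
    obtain ⟨hthrough, hlength⟩ := ih
    have hstart : start (k + 1) = z (start k) + 1 := Function.iterate_succ_apply' _ _ _
    have hk := hz_ge (start k)
    rw [enc_ofFn_succ (fun i => z (start i) - start i), ← append_assoc,
      through_append_singleton_iff]
    refine ⟨⟨hthrough.append_replicate fun i hi => hz_min (start k) _ (by omega) (by omega),
      ?_⟩, ?_⟩
    · simpa [hlength, Nat.add_sub_cancel' hk] using hz_zero (start k)
    · simp only [length_append, length_replicate, length_singleton, hlength, hstart]; omega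

theorem exists_frequently_zero_through_enc (x : ℕ → ℕ) :
    ∃ β, (∀ k, Through β (enc (ofFn fun i : Fin k => x i))) ∧ ∀ m, ∃ n ≥ m, β n = 0 := by
  obtain ⟨β, hβ⟩ := exists_through_of_prefix_chain (L := fun k => enc (ofFn fun i : Fin k => x i))
    (fun k => enc_ofFn_succ x k ▸ prefix_append _ _)
    (fun k => by simpa using length_le_length_enc (ofFn fun i : Fin k => x i))
  refine ⟨β, hβ, fun m => ?_⟩
  have hzero := hβ (m + 1)
  rw [enc_ofFn_succ, ← append_assoc, through_append_singleton_iff] at hzero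
  refine ⟨_, ?_, hzero.2⟩
  simpa using (length_le_length_enc (ofFn fun i : Fin m => x i)).trans (by simp)

/-- The binary tree `fT T` has a good branch iff the prefix-closed tree `T` has an
infinite branch. -/
theorem encoding_correct (T : List ℕ → Bool)
    (hpc : ∀ u v : List ℕ, u <+: v → T v = true → T u = true) :
    (∃ β, Good (fT T) β) ↔
      ∃ x : ℕ → ℕ, ∀ k : ℕ, T (List.ofFn fun i : Fin k => x i) = true := by
  have fT_eq_true (v : List (Fin 2)) :
      fT T v = true ↔ ∃ u m, T u = true ∧ v <+: enc u ++ replicate m 1 := by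
    simp [fT]
  constructor
  · rintro ⟨β, hlabel, hzero⟩
    obtain ⟨x, hx⟩ := exists_through_enc_of_frequently_zero hzero
    refine ⟨x, fun k => ?_⟩
    obtain ⟨u, m, hu, hpre⟩ := (fT_eq_true _).1 (hlabel (enc (ofFn fun i : Fin k => x i)).length)
    rw [hx k] at hpre
    exact hpc _ _ (prefix_of_enc_prefix_enc_append_replicate hpre) hu
  · rintro ⟨x, hx⟩
    obtain ⟨β, hβ, hzero⟩ := exists_frequently_zero_through_enc x
    refine ⟨β, fun n => (fT_eq_true _).2 ⟨_, 0, hx n, ?_⟩, hzero⟩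
    simpa using (hβ n).pre_prefix (by simpa using length_le_length_enc (ofFn fun i : Fin n => x i))
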